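/- arXiv:2003.14181 — 3 statements merged into one kernel-verified Lean document; each statement's English description precedes it below -/
import Mathlib

section
/- Let L = 2·c_max²/|z_s − z_r|, let 0 < λ < λ₀, and suppose β < 0 and c_max − c_* > L·λ. Then for every c ∈ [c_min, c_max] with |c − c_*| > L·λ one has J_WRI^α(c) ≥ J_WRI^α(c_max); that is, c = c_max minimizes J_WRI^α over the part of [c_min, c_max] outside [c_* − Lλ, c_* + Lλ]. (Theorem 2, case β < 0.) -/
/-!
For fixed `c` the WRI objective is a quadratic functional of the extended source `g`, and its
infimum has a closed form. The shear `(z, t) ↦ (z, t - |z_r - z| / c)` preserves the product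
measure, so Cauchy–Schwarz in `z` gives `‖S[c] g‖² ≤ Z / (4c²) · ‖g‖²`. With `k = 4α²c² / Z`, the
pointwise bound `k / (1 + k) · x² ≤ (x - y)² + k y²` then yields `J ≥ ½ · k / (1 + k) · ‖r‖²` for
the data residual `r = d_λ - S_p[c] w_λ`, and `g(z, t) = m · r(t + |z_r - z| / c)` attains it.
Away from `c_*` the two arrivals in `r` do not overlap, so `‖r‖² = (1/(4c_*²) + 1/(4c²)) ‖w₁‖²`,
and the resulting value `α² (c² + c_*²) ‖w₁‖² / (2c_*² (Z + 4α²c²))` decreases in `c` when `β < 0`.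
-/

open MeasureTheory Set

theorem sq_integral_le_measureReal_univ_mul_integral_sq {X : Type*} [MeasurableSpace X]
    {μ : Measure X} [IsFiniteMeasure μ] {f : X → ℝ} (hf : Integrable f μ)
    (hf2 : Integrable (fun x => f x ^ 2) μ) :
    (∫ x, f x ∂μ) ^ 2 ≤ μ.real univ * ∫ x, f x ^ 2 ∂μ := by
  rcases eq_zero_or_neZero μ with rfl | _
  · simp
  have hμ : 0 < μ.real univ := measureReal_univ_pos
  have jensen := (even_two.convexOn_pow (𝕜 := ℝ)).map_average_le
    (continuous_pow 2).continuousOn isClosed_univ (by simp) hf hf2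
  rw [average_eq, average_eq, smul_eq_mul, smul_eq_mul, mul_pow] at jensen
  have := mul_le_mul_of_nonneg_left jensen (sq_nonneg (μ.real univ))
  field_simp at this
  linarith

theorem div_one_add_mul_sq_le {k : ℝ} (hk : 0 ≤ k) (x y : ℝ) :
    k / (1 + k) * x ^ 2 ≤ (x - y) ^ 2 + k * y ^ 2 := by
  rw [div_mul_eq_mul_div, div_le_iff₀ (by linarith)]
  nlinarith [sq_nonneg (x - (1 + k) * y)]

theorem integral_sq_sub_of_mul_eq_zero {X : Type*} [MeasurableSpace X] {μ : Measure X}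
    {f g : X → ℝ} (hf : Integrable (fun x => f x ^ 2) μ) (hg : Integrable (fun x => g x ^ 2) μ)
    (hfg : ∀ x, f x * g x = 0) :
    ∫ x, (f x - g x) ^ 2 ∂μ = ∫ x, f x ^ 2 ∂μ + ∫ x, g x ^ 2 ∂μ := by
  rw [← integral_add hf hg]
  congr 1 with x
  linear_combination (-2) * hfg x

theorem intervalIntegral_sq_eq_integral_sq {a b : ℝ} {r : ℝ → ℝ}
    (hr : Function.support r ⊆ Ioc a b) : ∫ t in a..b, r t ^ 2 = ∫ t, r t ^ 2 :=
  intervalIntegral.integral_eq_integral_of_support_subset <|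
    (Function.support_pow r two_ne_zero).subset.trans hr

def MeasurableEquiv.shearSub {D : Type*} [MeasurableSpace D] (s : D → ℝ) (hs : Measurable s) :
    D × ℝ ≃ᵐ D × ℝ where
  toEquiv := .prodShear (.refl _) fun z => Equiv.subRight (s z)
  measurable_toFun := measurable_fst.prodMk (measurable_snd.sub (hs.comp measurable_fst))
  measurable_invFun := measurable_fst.prodMk (measurable_snd.add (hs.comp measurable_fst))

theorem measurePreserving_shearSub {D : Type*} [MeasurableSpace D] (ν : Measure D) [SFinite ν]
    {s : D → ℝ} (hs : Measurable s) :
    MeasurePreserving (MeasurableEquiv.shearSub s hs) (ν.prod volume) (ν.prod volume) :=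
  (MeasurePreserving.id ν).skew_product (g := fun z t => t - s z)
    (measurable_snd.sub (hs.comp measurable_fst))
    (ae_of_all _ fun z => (measurePreserving_sub_right volume (s z)).map_eq)

section WRI

variable {D : Type*} [MeasurableSpace D] (ν : Measure D)

noncomputable def extendedModeling (s : D → ℝ) (c : ℝ) (g : D → ℝ → ℝ) (t : ℝ) : ℝ :=
  1 / (2 * c) * ∫ z, g z (t - s z) ∂ν

/-- In the paper's setting `ν` is Lebesgue measure on `[z_min, z_max]`, `s z = |z_r - z| / c`
and `r = d_λ - S_p[c] w_λ` is the data residual, `pointResidual (wavelet w₁ λ) |z_s - z_r| c_* c`. -/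
noncomputable def wriObjective (s : D → ℝ) (T c α : ℝ) (r : ℝ → ℝ) (g : D → ℝ → ℝ) : ℝ :=
  1 / 2 * ((∫ t in (0:ℝ)..T, (r t - extendedModeling ν s c g t) ^ 2)
    + α ^ 2 * ∫ z, (∫ t, g z t ^ 2) ∂ν)

variable {s : D → ℝ}

theorem extendedModeling_shifted (c m : ℝ) (r : ℝ → ℝ) (t : ℝ) :
    extendedModeling ν s c (fun z t => m * r (t + s z)) t = ν.real univ * m / (2 * c) * r t := by
  simp only [extendedModeling, sub_add_cancel, integral_const, smul_eq_mul]
  ring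

theorem integral_integral_sq_shifted (m : ℝ) (r : ℝ → ℝ) :
    ∫ z, (∫ t, (m * r (t + s z)) ^ 2) ∂ν = ν.real univ * m ^ 2 * ∫ t, r t ^ 2 := by
  simp only [mul_pow, integral_add_right_eq_self (fun t => m ^ 2 * r t ^ 2), integral_const,
    smul_eq_mul, integral_const_mul]
  ring

variable [IsFiniteMeasure ν]

section ModelingBound

variable (hs : Measurable s) {g : D → ℝ → ℝ}
  (hg : MemLp (fun p : D × ℝ => g p.1 p.2) 2 (ν.prod volume))
include hs hg

theorem memLp_comp_shearSub :
    MemLp (fun p : D × ℝ => g p.1 (p.2 - s p.1)) 2 (ν.prod volume) :=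
  hg.comp_measurePreserving (measurePreserving_shearSub ν hs)

theorem integrable_integral_sq_comp_sub : Integrable (fun t => ∫ z, g z (t - s z) ^ 2 ∂ν) :=
  (memLp_comp_shearSub ν hs hg).integrable_sq.swap.integral_prod_left

theorem integral_integral_sq_comp_sub :
    ∫ t, (∫ z, g z (t - s z) ^ 2 ∂ν) = ∫ z, (∫ t, g z t ^ 2) ∂ν := by
  have hH := (memLp_comp_shearSub ν hs hg).integrable_sq
  rw [← integral_integral_swap (f := fun z t => g z (t - s z) ^ 2) hH,
    integral_integral (f := fun z t => g z (t - s z) ^ 2) hH,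
    integral_integral (f := fun z t => g z t ^ 2) hg.integrable_sq]
  exact (measurePreserving_shearSub ν hs).integral_comp' (fun p => g p.1 p.2 ^ 2)

theorem ae_extendedModeling_sq_le (c : ℝ) :
    ∀ᵐ t, extendedModeling ν s c g t ^ 2
      ≤ ν.real univ / (4 * c ^ 2) * ∫ z, g z (t - s z) ^ 2 ∂ν := by
  have hH := memLp_comp_shearSub ν hs hg
  filter_upwards [hH.aestronglyMeasurable.prod_swap.prodMk_left, hH.integrable_sq.prod_left_ae]
    with t hmeas hsq
  have hint : Integrable (fun z => g z (t - s z)) ν :=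
    ((memLp_two_iff_integrable_sq hmeas).2 hsq).integrable one_le_two
  calc extendedModeling ν s c g t ^ 2
      = 1 / (4 * c ^ 2) * (∫ z, g z (t - s z) ∂ν) ^ 2 := by
        rw [extendedModeling, mul_pow]; ring
    _ ≤ 1 / (4 * c ^ 2) * (ν.real univ * ∫ z, g z (t - s z) ^ 2 ∂ν) := by
        gcongr; exact sq_integral_le_measureReal_univ_mul_integral_sq hint hsq
    _ = _ := by ring

theorem memLp_extendedModeling (c : ℝ) : MemLp (extendedModeling ν s c g) 2 volume := by
  have hmeas : AEStronglyMeasurable (extendedModeling ν s c g) volume :=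
    ((memLp_comp_shearSub ν hs hg).aestronglyMeasurable.prod_swap.integral_prod_right').const_mul _
  refine (memLp_two_iff_integrable_sq hmeas).2 <|
    ((integrable_integral_sq_comp_sub ν hs hg).const_mul (ν.real univ / (4 * c ^ 2))).mono'
      (hmeas.pow 2) ?_
  filter_upwards [ae_extendedModeling_sq_le ν hs hg c] with t ht
  rwa [Real.norm_of_nonneg (sq_nonneg _)]

theorem integral_extendedModeling_sq_le (c : ℝ) :
    ∫ t, extendedModeling ν s c g t ^ 2 ≤ ν.real univ / (4 * c ^ 2) * ∫ z, (∫ t, g z t ^ 2) ∂ν := by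
  rw [← integral_integral_sq_comp_sub ν hs hg, ← integral_const_mul]
  exact integral_mono_ae (memLp_extendedModeling ν hs hg c).integrable_sq
    ((integrable_integral_sq_comp_sub ν hs hg).const_mul _) (ae_extendedModeling_sq_le ν hs hg c)

end ModelingBound

theorem memLp_shifted (hs : Measurable s) {r : ℝ → ℝ} (hr : MemLp r 2 volume) (m : ℝ) :
    MemLp (fun p : D × ℝ => m * r (p.2 + s p.1)) 2 (ν.prod volume) := by
  have hsnd : MemLp (fun p : D × ℝ => m * r p.2) 2 (ν.prod volume) :=
    (memLp_two_iff_integrable_sq (hr.aestronglyMeasurable.comp_snd.const_mul m)).2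
      ((hr.const_mul m).integrable_sq.comp_snd ν)
  exact hsnd.comp_measurePreserving (measurePreserving_shearSub ν hs).symm

variable [NeZero ν] {T c α : ℝ} {r : ℝ → ℝ}

theorem le_wriObjective (hs : Measurable s) (hT : 0 ≤ T) (hc : c ≠ 0) (hr : MemLp r 2 volume)
    {g : D → ℝ → ℝ} (hg : MemLp (fun p : D × ℝ => g p.1 p.2) 2 (ν.prod volume)) :
    1 / 2 * (4 * α ^ 2 * c ^ 2 / (ν.real univ + 4 * α ^ 2 * c ^ 2)) * ∫ t in (0:ℝ)..T, r t ^ 2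
      ≤ wriObjective ν s T c α r g := by
  set Z := ν.real univ
  set h := extendedModeling ν s c g
  set k := 4 * α ^ 2 * c ^ 2 / Z
  have hZ : 0 < Z := measureReal_univ_pos
  have hk : 0 ≤ k := by positivity
  have hq : 4 * α ^ 2 * c ^ 2 / (Z + 4 * α ^ 2 * c ^ 2) = k / (1 + k) := by
    simp only [k]; field_simp
  have hh := memLp_extendedModeling ν hs hg c
  have hpenalty : k * ∫ t in (0:ℝ)..T, h t ^ 2 ≤ α ^ 2 * ∫ z, (∫ t, g z t ^ 2) ∂ν :=
    calc k * ∫ t in (0:ℝ)..T, h t ^ 2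
        ≤ k * ∫ t, h t ^ 2 := by
          gcongr
          rw [intervalIntegral.integral_of_le hT]
          exact setIntegral_le_integral hh.integrable_sq (ae_of_all _ fun t => sq_nonneg _)
      _ ≤ k * (Z / (4 * c ^ 2) * ∫ z, (∫ t, g z t ^ 2) ∂ν) := by
          gcongr; exact integral_extendedModeling_sq_le ν hs hg c
      _ = α ^ 2 * ∫ z, (∫ t, g z t ^ 2) ∂ν := by simp only [k]; field_simp
  have hresidual : IntervalIntegrable (fun t => (r t - h t) ^ 2) volume 0 T :=
    (hr.sub hh).integrable_sq.intervalIntegrable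
  have hmodel : IntervalIntegrable (fun t => k * h t ^ 2) volume 0 T :=
    (hh.integrable_sq.const_mul k).intervalIntegrable
  have hpointwise : ∫ t in (0:ℝ)..T, k / (1 + k) * r t ^ 2
      ≤ ∫ t in (0:ℝ)..T, ((r t - h t) ^ 2 + k * h t ^ 2) :=
    intervalIntegral.integral_mono_on hT (hr.integrable_sq.const_mul _).intervalIntegrable
      (hresidual.add hmodel) fun t _ => div_one_add_mul_sq_le hk _ _
  rw [intervalIntegral.integral_add hresidual hmodel, intervalIntegral.integral_const_mul,
    intervalIntegral.integral_const_mul] at hpointwise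
  rw [hq, wriObjective]
  linarith

theorem wriObjective_shifted (hc : c ≠ 0) (hrT : Function.support r ⊆ Ioc 0 T) :
    wriObjective ν s T c α r
        (fun z t => 2 * c / (ν.real univ + 4 * α ^ 2 * c ^ 2) * r (t + s z))
      = 1 / 2 * (4 * α ^ 2 * c ^ 2 / (ν.real univ + 4 * α ^ 2 * c ^ 2)) * ∫ t, r t ^ 2 := by
  have hsq : ∀ (a t : ℝ), (r t - a * r t) ^ 2 = (1 - a) ^ 2 * r t ^ 2 := fun a t => by ring
  rw [wriObjective, integral_integral_sq_shifted]
  simp only [extendedModeling_shifted, hsq, intervalIntegral.integral_const_mul,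
    intervalIntegral_sq_eq_integral_sq hrT]
  have hZ : 0 < ν.real univ := measureReal_univ_pos
  generalize ν.real univ = Z at hZ ⊢
  have hden : 0 < Z + 4 * α ^ 2 * c ^ 2 := by positivity
  field_simp
  ring

theorem sInf_wriObjective (hs : Measurable s) (hT : 0 ≤ T) (hc : c ≠ 0)
    (hr : MemLp r 2 volume) (hrT : Function.support r ⊆ Ioc 0 T) :
    sInf {v | ∃ g : D → ℝ → ℝ, MemLp (fun p : D × ℝ => g p.1 p.2) 2 (ν.prod volume) ∧
        v = wriObjective ν s T c α r g}
      = 1 / 2 * (4 * α ^ 2 * c ^ 2 / (ν.real univ + 4 * α ^ 2 * c ^ 2)) * ∫ t, r t ^ 2 := by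
  refine IsLeast.csInf_eq ⟨⟨_, memLp_shifted ν hs hr _, (wriObjective_shifted ν hc hrT).symm⟩, ?_⟩
  rintro v ⟨g, hg, rfl⟩
  rw [← intervalIntegral_sq_eq_integral_sq hrT]
  exact le_wriObjective ν hs hT hc hr hg

end WRI

theorem support_comp_sub_subset {w : ℝ → ℝ} {lam : ℝ} (hw : Function.support w ⊆ Ioo 0 lam)
    (τ : ℝ) : Function.support (fun t => w (t - τ)) ⊆ Ioo τ (τ + lam) := fun t ht => by
  have := hw ht
  constructor <;> linarith [this.1, this.2]

theorem comp_sub_mul_comp_sub_eq_zero {w : ℝ → ℝ} {lam τ₁ τ₂ : ℝ}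
    (hw : Function.support w ⊆ Ioo 0 lam) (hsep : lam ≤ |τ₁ - τ₂|) (t : ℝ) :
    w (t - τ₁) * w (t - τ₂) = 0 := by
  by_contra hne
  have h₁ := support_comp_sub_subset hw τ₁ (show w (t - τ₁) ≠ 0 from left_ne_zero_of_mul hne)
  have h₂ := support_comp_sub_subset hw τ₂ (show w (t - τ₂) ≠ 0 from right_ne_zero_of_mul hne)
  exact hsep.not_gt (abs_sub_lt_iff.2 ⟨by linarith [h₁.1, h₂.2], by linarith [h₁.2, h₂.1]⟩)

noncomputable def wavelet (w₁ : ℝ → ℝ) (lam t : ℝ) : ℝ := 1 / Real.sqrt lam * w₁ (t / lam)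

section Wavelet

variable {w₁ : ℝ → ℝ} {lam : ℝ}

theorem support_wavelet_subset (hw₁ : Function.support w₁ ⊆ Ioo 0 1) (hlam : 0 < lam) :
    Function.support (wavelet w₁ lam) ⊆ Ioo 0 lam := fun t ht => by
  have := hw₁ (show w₁ (t / lam) ≠ 0 from fun h => ht (by simp [wavelet, h]))
  rwa [mem_Ioo, lt_div_iff₀ hlam, div_lt_iff₀ hlam, zero_mul, one_mul] at this

theorem memLp_wavelet (hw₁c : Continuous w₁) (hw₁ : Function.support w₁ ⊆ Ioo 0 1)
    (hlam : 0 < lam) : MemLp (wavelet w₁ lam) 2 volume :=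
  (continuous_const.mul (hw₁c.comp (continuous_id.div_const lam))).memLp_of_hasCompactSupport
    (HasCompactSupport.of_support_subset_isCompact isCompact_Icc
      ((support_wavelet_subset hw₁ hlam).trans Ioo_subset_Icc_self))

theorem integral_wavelet_sq (hlam : 0 < lam) :
    ∫ t, wavelet w₁ lam t ^ 2 = ∫ t, w₁ t ^ 2 := by
  simp only [wavelet, mul_pow, div_pow, one_pow, Real.sq_sqrt hlam.le, integral_const_mul,
    Measure.integral_comp_div (fun u => w₁ u ^ 2), abs_of_pos hlam, smul_eq_mul]
  field_simp

end Wavelet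

noncomputable def pointResidual (w : ℝ → ℝ) (a cstar c t : ℝ) : ℝ :=
  1 / (2 * cstar) * w (t - a / cstar) - 1 / (2 * c) * w (t - a / c)

section PointResidual

variable {w : ℝ → ℝ} {a cstar c lam : ℝ}

theorem memLp_pointResidual (hw : MemLp w 2 volume) :
    MemLp (pointResidual w a cstar c) 2 volume :=
  ((hw.comp_measurePreserving (measurePreserving_sub_right volume _)).const_mul _).sub
    ((hw.comp_measurePreserving (measurePreserving_sub_right volume _)).const_mul _)

theorem support_pointResidual_subset {T : ℝ} (hw : Function.support w ⊆ Ioo 0 lam)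
    (hcstar : 0 ≤ a / cstar) (hcstarT : a / cstar + lam ≤ T)
    (hc : 0 ≤ a / c) (hcT : a / c + lam ≤ T) :
    Function.support (pointResidual w a cstar c) ⊆ Ioc 0 T := by
  have hshift : ∀ τ, 0 ≤ τ → τ + lam ≤ T → Function.support (fun t => w (t - τ)) ⊆ Ioc 0 T :=
    fun τ h0 hT => (support_comp_sub_subset hw τ).trans
      (Ioo_subset_Ioc_self.trans (Ioc_subset_Ioc h0 hT))
  refine (Function.support_sub _ _).trans (union_subset ?_ ?_)
  · exact (Function.support_mul_subset_right _ _).trans (hshift _ hcstar hcstarT)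
  · exact (Function.support_mul_subset_right _ _).trans (hshift _ hc hcT)

theorem integral_pointResidual_sq (hw : Function.support w ⊆ Ioo 0 lam)
    (hw2 : Integrable (fun t => w t ^ 2)) (hsep : lam ≤ |a / c - a / cstar|) :
    ∫ t, pointResidual w a cstar c t ^ 2
      = (1 / (4 * cstar ^ 2) + 1 / (4 * c ^ 2)) * ∫ t, w t ^ 2 := by
  have hshift : ∀ (A τ : ℝ), ∫ t, (A * w (t - τ)) ^ 2 = A ^ 2 * ∫ t, w t ^ 2 := fun A τ => by
    simp only [mul_pow, integral_const_mul, integral_sub_right_eq_self (fun t => w t ^ 2) τ]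
  have hint : ∀ (A τ : ℝ), Integrable (fun t => (A * w (t - τ)) ^ 2) := fun A τ => by
    simp only [mul_pow]
    exact (hw2.comp_sub_right τ).const_mul _
  rw [abs_sub_comm] at hsep
  simp only [pointResidual]
  rw [integral_sq_sub_of_mul_eq_zero (hint _ _) (hint _ _) fun t => by
    rw [mul_mul_mul_comm, comp_sub_mul_comp_sub_eq_zero hw hsep, mul_zero], hshift, hshift]
  ring

end PointResidual

theorem two_mul_lt_abs_div_sub_div {a c cstar cmax lam : ℝ} (ha : 0 < a) (hc : 0 < c)
    (hcstar : 0 < cstar) (hcmax : c ≤ cmax) (hcstarmax : cstar ≤ cmax)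
    (hgap : 2 * cmax ^ 2 / a * lam < |c - cstar|) :
    2 * lam < |a / c - a / cstar| := by
  have hdiff : |a / c - a / cstar| * (c * cstar) = a * |c - cstar| := by
    have : a / c - a / cstar = a * (cstar - c) / (c * cstar) := by field_simp
    rw [this, abs_div, abs_mul, abs_of_pos ha, abs_of_pos (mul_pos hc hcstar), abs_sub_comm,
      div_mul_cancel₀ _ (by positivity)]
  have hprod : c * cstar ≤ cmax ^ 2 := by nlinarith
  rw [div_mul_eq_mul_div, div_lt_iff₀ ha] at hgap
  have hcmax : 0 < cmax ^ 2 := by have := hc.trans_le hcmax; positivity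
  nlinarith [abs_nonneg (a / c - a / cstar)]

noncomputable def wriMinValue (Z α cstar W c : ℝ) : ℝ :=
  1 / 2 * (4 * α ^ 2 * c ^ 2 / (Z + 4 * α ^ 2 * c ^ 2)) * ((1 / (4 * cstar ^ 2) + 1 / (4 * c ^ 2)) * W)

theorem wriMinValue_le_of_le {Z α cstar W c c' : ℝ} (hZ : 0 < Z) (hβ : Z < 4 * α ^ 2 * cstar ^ 2)
    (hW : 0 ≤ W) (hc : 0 < c) (hcc' : c ≤ c') :
    wriMinValue Z α cstar W c' ≤ wriMinValue Z α cstar W c := by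
  have hcstar : cstar ≠ 0 := by rintro rfl; linarith
  have hform : ∀ x : ℝ, 0 < x → wriMinValue Z α cstar W x
      = α ^ 2 * W / (2 * cstar ^ 2) * ((x ^ 2 + cstar ^ 2) / (Z + 4 * α ^ 2 * x ^ 2)) := by
    intro x hx
    rw [wriMinValue]
    field_simp
  rw [hform c hc, hform c' (hc.trans_le hcc')]
  refine mul_le_mul_of_nonneg_left ?_ (by positivity)
  rw [div_le_div_iff₀ (by positivity) (by positivity)]
  have hsq : c ^ 2 ≤ c' ^ 2 := pow_le_pow_left₀ hc.le hcc' 2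
  nlinarith [mul_nonneg (sub_nonneg.2 hsq) (sub_nonneg.2 hβ.le)]

theorem wri_spurious_minimizer_at_cmax_general
    (zs zr zmin zmax T cmin cmax cstar lam α : ℝ) (w1 : ℝ → ℝ)
    (hzr : zs ≠ zr) (hz : zmin < zmax) (hT : 0 < T)
    (hcmin : 0 < cmin) (hcc : cmin ≤ cmax)
    (hw1c : Continuous w1) (hw1s : Function.support w1 ⊆ Ioo 0 1)
    (hcstar : cstar ∈ Icc cmin cmax)
    (hlam : 0 < lam) (hlam0 : lam < T - |zs - zr| / cmin)
    (hβ : (zmax - zmin) / cstar^2 - 4 * α^2 < 0)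
    (hgap : cmax - cstar > (2 * cmax ^ 2 / |zs - zr|) * lam)
    (JW : ℝ → ℝ)
    (hJW : ∀ c, JW c = sInf { v : ℝ | ∃ g : ℝ → ℝ → ℝ,
        MemLp (fun p : ℝ × ℝ => g p.1 p.2) 2
          ((volume.restrict (Icc zmin zmax)).prod volume) ∧
        v = (1/2) * ((∫ t in (0:ℝ)..T,
              ((1/(2*cstar)) * ((1/Real.sqrt lam) * w1 ((t - |zs - zr| / cstar) / lam))
                - (1/(2*c)) * ((1/Real.sqrt lam) * w1 ((t - |zs - zr| / c) / lam))
                - (1/(2*c)) * ∫ z in zmin..zmax, g z (t - |zr - z| / c)) ^ 2)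
            + α^2 * ∫ z in zmin..zmax, ∫ t : ℝ, (g z t) ^ 2) }) :
    ∀ c ∈ Icc cmin cmax, |c - cstar| > (2 * cmax ^ 2 / |zs - zr|) * lam →
      JW c ≥ JW cmax := by
  intro c hc hgapc
  have ha : 0 < |zs - zr| := abs_pos.2 (sub_ne_zero.2 hzr)
  have hcstar0 : 0 < cstar := hcmin.trans_le hcstar.1
  have hZ : (volume.restrict (Icc zmin zmax)).real univ = zmax - zmin := by simp [hz.le]
  have : NeZero (volume.restrict (Icc zmin zmax)) := ⟨fun h => by simp [h] at hZ; linarith⟩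
  have hwave := memLp_wavelet hw1c hw1s hlam
  have hwindow : ∀ x, cmin ≤ x → 0 ≤ |zs - zr| / x ∧ |zs - zr| / x + lam ≤ T := fun x hx =>
    ⟨div_nonneg ha.le (hcmin.le.trans hx), by linarith [div_le_div_of_nonneg_left ha.le hcmin hx]⟩
  have hclosed : ∀ x ∈ Icc cmin cmax, (2 * cmax ^ 2 / |zs - zr|) * lam < |x - cstar| →
      JW x = wriMinValue (zmax - zmin) α cstar (∫ t, w1 t ^ 2) x := by
    intro x hx hgapx
    have hx0 : 0 < x := hcmin.trans_le hx.1
    have hsep : lam ≤ |(|zs - zr|) / x - |zs - zr| / cstar| := by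
      linarith [two_mul_lt_abs_div_sub_div ha hx0 hcstar0 hx.2 hcstar.2 hgapx]
    rw [wriMinValue, ← integral_wavelet_sq hlam, ← integral_pointResidual_sq
      (support_wavelet_subset hw1s hlam) hwave.integrable_sq hsep, ← hZ,
      ← sInf_wriObjective _ (s := fun z => |zr - z| / x) (by fun_prop) hT.le hx0.ne'
        (memLp_pointResidual hwave)
        (support_pointResidual_subset (support_wavelet_subset hw1s hlam) (hwindow cstar hcstar.1).1
          (hwindow cstar hcstar.1).2 (hwindow x hx.1).1 (hwindow x hx.1).2)]
    simp only [hJW x, intervalIntegral.integral_of_le hz.le, ← integral_Icc_eq_integral_Ioc]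
    rfl
  rw [ge_iff_le, hclosed c hc hgapc, hclosed cmax ⟨hcc, le_rfl⟩ (hgap.trans_le (le_abs_self _))]
  exact wriMinValue_le_of_le (sub_pos.2 hz) ((div_lt_iff₀ (by positivity)).1 (sub_neg.1 hβ))
    (integral_nonneg fun t => sq_nonneg _) (hcmin.trans_le hc.1) hc.2

/-- Theorem 2 of the paper, case `β < 0`: outside a wavelength-sized neighborhood of
the target velocity, the WRI objective is minimized at `c = cmax`. -/
theorem wri_spurious_minimizer_at_cmax
    (zs zr zmin zmax T cmin cmax cstar lam α : ℝ) (w1 : ℝ → ℝ)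
    (hzr : zs ≠ zr) (hz : zmin < zmax) (hT : 0 < T)
    (hcmin : 0 < cmin) (hcc : cmin ≤ cmax)
    (htransit : |zs - zr| / cmin < T)
    (hw1c : Continuous w1) (hw1s : Function.support w1 ⊆ Ioo 0 1)
    (hcstar : cstar ∈ Icc cmin cmax)
    (hlam : 0 < lam) (hlam0 : lam < T - |zs - zr| / cmin)
    (hα : 0 < α)
    (hβ : (zmax - zmin) / cstar^2 - 4 * α^2 < 0)
    (hgap : cmax - cstar > (2 * cmax ^ 2 / |zs - zr|) * lam)
    (JW : ℝ → ℝ)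
    (hJW : ∀ c, JW c = sInf { v : ℝ | ∃ g : ℝ → ℝ → ℝ,
        MemLp (fun p : ℝ × ℝ => g p.1 p.2) 2
          ((volume.restrict (Icc zmin zmax)).prod volume) ∧
        v = (1/2) * ((∫ t in (0:ℝ)..T,
              ((1/(2*cstar)) * ((1/Real.sqrt lam) * w1 ((t - |zs - zr| / cstar) / lam))
                - (1/(2*c)) * ((1/Real.sqrt lam) * w1 ((t - |zs - zr| / c) / lam))
                - (1/(2*c)) * ∫ z in zmin..zmax, g z (t - |zr - z| / c)) ^ 2)
            + α^2 * ∫ z in zmin..zmax, ∫ t : ℝ, (g z t) ^ 2) }) :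
    ∀ c ∈ Icc cmin cmax, |c - cstar| > (2 * cmax ^ 2 / |zs - zr|) * lam →
      JW c ≥ JW cmax :=
  wri_spurious_minimizer_at_cmax_general zs zr zmin zmax T cmin cmax cstar lam α w1 hzr hz hT hcmin
    hcc hw1c hw1s hcstar hlam hlam0 hβ hgap JW hJW
end

section
/- Let L = 2·c_max²/|z_s − z_r| and let 0 < λ < λ₀. If c, c_* ∈ [c_min, c_max] satisfy |c − c_*| > L·λ, then the functions S_p[c]w_λ and S_p[c_*]w_λ have disjoint supports in [0,T], and hence are orthogonal in L²([0,T]): ∫_0^T (S_p[c]w_λ)(t)·(S_p[c_*]w_λ)(t) dt = 0. -/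
open MeasureTheory Set

/-! The trace predicted with velocity `c` is `w_λ` delayed by the arrival time `|zs - zr| / c`,
so it is supported in an interval of length `λ`. Two arrival times differ by
`|zs - zr| |c - c*| / (c c*) ≥ |zs - zr| |c - c*| / cmax² > λ`, so the two intervals are disjoint
and the product of the traces vanishes identically. -/

theorem support_comp_div_sub_subset_Ioo {w : ℝ → ℝ} {tau lam : ℝ} (hlam : 0 < lam)
    (hw : Function.support w ⊆ Ioo 0 1) :
    Function.support (fun t => w ((t - tau) / lam)) ⊆ Ioo tau (tau + lam) := by
  intro t ht
  obtain ⟨hpos, hlt⟩ := hw ht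
  rw [div_pos_iff_of_pos_right hlam] at hpos
  rw [div_lt_one hlam] at hlt
  constructor <;> linarith

theorem disjoint_Ioo_add_of_lt_abs_sub {a b lam : ℝ} (h : lam < |a - b|) :
    Disjoint (Ioo a (a + lam)) (Ioo b (b + lam)) := by
  rw [Set.disjoint_left]
  rintro t ⟨hat, hta⟩ ⟨hbt, htb⟩
  rw [lt_abs] at h
  rcases h with h | h <;> linarith

theorem lt_abs_div_sub_div {D c c' M s : ℝ} (hD : 0 < D) (hc : c ∈ Ioc 0 M)
    (hc' : c' ∈ Ioc 0 M) (h : M ^ 2 / D * s < |c - c'|) : s < |D / c - D / c'| := by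
  have hcc' : 0 < c * c' := mul_pos hc.1 hc'.1
  have hM : c * c' ≤ M ^ 2 := by nlinarith [hc.2, hc'.2, hc.1.le, hc'.1.le]
  have hdiff : |D / c - D / c'| = D * |c - c'| / (c * c') := by
    have : D / c - D / c' = D * (c' - c) / (c * c') := by
      field_simp [hc.1.ne', hc'.1.ne']
    rw [this, abs_div, abs_mul, abs_of_pos hD, abs_of_pos hcc', abs_sub_comm]
  rw [hdiff]
  calc s < D * |c - c'| / M ^ 2 := by
        rw [lt_div_iff₀ (hcc'.trans_le hM)]
        rw [div_mul_eq_mul_div, div_lt_iff₀ hD] at h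
        linarith
    _ ≤ D * |c - c'| / (c * c') := by gcongr

theorem mul_eq_zero_of_disjoint_support {α M₀ : Type*} [MulZeroClass M₀] {f g : α → M₀}
    (h : Disjoint (Function.support f) (Function.support g)) :
    (fun x => f x * g x) = 0 := by
  rw [← Function.support_eq_empty_iff, ← Set.subset_empty_iff, ← h.inter_eq]
  exact subset_inter (Function.support_mul_subset_left f g) (Function.support_mul_subset_right f g)

theorem predicted_traces_disjoint_and_orthogonal_general
    (zs zr T cmin cmax cstar c lam : ℝ) (w1 : ℝ → ℝ)
    (hzr : zs ≠ zr)
    (hcmin : 0 < cmin)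
    (hw1s : Function.support w1 ⊆ Ioo 0 1)
    (hlam : 0 < lam)
    (hc : c ∈ Icc cmin cmax) (hcstar : cstar ∈ Icc cmin cmax)
    (hsep : |c - cstar| > (2 * cmax ^ 2 / |zs - zr|) * lam) :
    Disjoint
      (Function.support (fun t : ℝ =>
        (1/(2*c)) * ((1/Real.sqrt lam) * w1 ((t - |zs - zr| / c) / lam))))
      (Function.support (fun t : ℝ =>
        (1/(2*cstar)) * ((1/Real.sqrt lam) * w1 ((t - |zs - zr| / cstar) / lam)))) ∧
    (∫ t in (0:ℝ)..T,
        ((1/(2*c)) * ((1/Real.sqrt lam) * w1 ((t - |zs - zr| / c) / lam))) *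
        ((1/(2*cstar)) * ((1/Real.sqrt lam) * w1 ((t - |zs - zr| / cstar) / lam)))) = 0 := by
  have hD : 0 < |zs - zr| := abs_pos.mpr (sub_ne_zero.mpr hzr)
  have hsep' : cmax ^ 2 / |zs - zr| * lam < |c - cstar| := by
    refine lt_of_le_of_lt ?_ hsep
    gcongr
    linarith [sq_nonneg cmax]
  have harrival := lt_abs_div_sub_div hD ⟨hcmin.trans_le hc.1, hc.2⟩
    ⟨hcmin.trans_le hcstar.1, hcstar.2⟩ hsep'
  have hsupport (a tau : ℝ) :
      Function.support (fun t => a * (1 / Real.sqrt lam * w1 ((t - tau) / lam)))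
        ⊆ Ioo tau (tau + lam) :=
    ((Function.support_mul_subset_right _ _).trans (Function.support_mul_subset_right _ _)).trans
      (support_comp_div_sub_subset_Ioo hlam hw1s)
  have hdisj := (disjoint_Ioo_add_of_lt_abs_sub harrival).mono (hsupport (1 / (2 * c)) _)
    (hsupport (1 / (2 * cstar)) _)
  refine ⟨hdisj, ?_⟩
  rw [mul_eq_zero_of_disjoint_support hdisj]
  exact intervalIntegral.integral_zero

/-- If `|c - cstar| > L·lam` then the traces predicted with velocities `c` and `cstar`
have disjoint supports, hence are orthogonal in `L²([0,T])`. -/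
theorem predicted_traces_disjoint_and_orthogonal
    (zs zr T cmin cmax cstar c lam : ℝ) (w1 : ℝ → ℝ)
    (hzr : zs ≠ zr) (hT : 0 < T)
    (hcmin : 0 < cmin) (hcc : cmin ≤ cmax)
    (htransit : |zs - zr| / cmin < T)
    (hw1c : Continuous w1) (hw1s : Function.support w1 ⊆ Ioo 0 1)
    (hlam : 0 < lam) (hlam0 : lam < T - |zs - zr| / cmin)
    (hc : c ∈ Icc cmin cmax) (hcstar : cstar ∈ Icc cmin cmax)
    (hsep : |c - cstar| > (2 * cmax ^ 2 / |zs - zr|) * lam) :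
    Disjoint
      (Function.support (fun t : ℝ =>
        (1/(2*c)) * ((1/Real.sqrt lam) * w1 ((t - |zs - zr| / c) / lam))))
      (Function.support (fun t : ℝ =>
        (1/(2*cstar)) * ((1/Real.sqrt lam) * w1 ((t - |zs - zr| / cstar) / lam)))) ∧
    (∫ t in (0:ℝ)..T,
        ((1/(2*c)) * ((1/Real.sqrt lam) * w1 ((t - |zs - zr| / c) / lam))) *
        ((1/(2*cstar)) * ((1/Real.sqrt lam) * w1 ((t - |zs - zr| / cstar) / lam)))) = 0 :=
  predicted_traces_disjoint_and_orthogonal_general zs zr T cmin cmax cstar c lam w1 hzr hcmin hw1s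
    hlam hc hcstar hsep
end

section
/- For each c > 0, the formula (S[c]f)(t) = (1/(2c))·∫_{z_min}^{z_max} f(z, t − |z_r − z|/c) dz defines a bounded linear operator S[c] : L²([z_min,z_max]×ℝ) → L²([0,T]), with operator norm at most √(z_max − z_min)/(2c): for every f ∈ L²([z_min,z_max]×ℝ), ‖S[c]f‖_{L²([0,T])} ≤ (√(z_max − z_min)/(2c))·‖f‖_{L²([z_min,z_max]×ℝ)}. -/
/-!
The shear `(z, t) ↦ (z, t - |zr - z| / c)` preserves the product measure on the strip, so
`F (z, t) := f z (t - |zr - z| / c)` is again in `L²`, with the same norm, and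
`S[c] f (t) = (2c)⁻¹ ∫ F (z, t) dz`. By Cauchy–Schwarz in `z`, the square of this integral is at
most `(zmax - zmin) ∫ F (z, t)² dz`; integrating over all `t ∈ ℝ` rather than `[0, T]` only
increases the left side, and Fubini turns the right side into `(zmax - zmin) ‖f‖²`.
-/

open MeasureTheory Set

section CauchySchwarz

variable {α β : Type*} [MeasurableSpace α] [MeasurableSpace β] {μ : Measure α} {ν : Measure β}
  [IsFiniteMeasure μ]

theorem sq_integral_le_measureReal_mul_integral_sq {f : α → ℝ} (hf : MemLp f 2 μ) :
    (∫ x, f x ∂μ) ^ 2 ≤ μ.real univ * ∫ x, f x ^ 2 ∂μ := by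
  rcases eq_zero_or_neZero μ with rfl | _
  · simp
  have hm : 0 < μ.real univ := measureReal_univ_pos
  have hJensen : (⨍ x, f x ∂μ) ^ 2 ≤ ⨍ x, f x ^ 2 ∂μ :=
    even_two.convexOn_pow.map_average_le (continuous_pow 2).continuousOn isClosed_univ
      (ae_of_all _ fun _ => mem_univ _) (hf.integrable one_le_two) hf.integrable_sq
  rw [average_eq, average_eq, smul_eq_mul, smul_eq_mul] at hJensen
  calc (∫ x, f x ∂μ) ^ 2 = μ.real univ ^ 2 * ((μ.real univ)⁻¹ * ∫ x, f x ∂μ) ^ 2 := by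
        field_simp
    _ ≤ μ.real univ ^ 2 * ((μ.real univ)⁻¹ * ∫ x, f x ^ 2 ∂μ) := by gcongr
    _ = μ.real univ * ∫ x, f x ^ 2 ∂μ := by field_simp

theorem ae_sq_integral_prodMk_right_le [SFinite ν] {F : α × β → ℝ} (hF : MemLp F 2 (μ.prod ν)) :
    ∀ᵐ y ∂ν, (∫ x, F (x, y) ∂μ) ^ 2 ≤ μ.real univ * ∫ x, F (x, y) ^ 2 ∂μ := by
  filter_upwards [hF.1.prodMk_right, hF.integrable_sq.prod_left_ae] with y hmeas hsq
  exact sq_integral_le_measureReal_mul_integral_sq ((memLp_two_iff_integrable_sq hmeas).2 hsq)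

end CauchySchwarz

theorem measurePreserving_prod_sub_shear {α G : Type*} [MeasurableSpace α] [MeasurableSpace G]
    [AddGroup G] [MeasurableAdd G] [MeasurableSub₂ G] (μ : Measure α) (ν : Measure G) [SFinite μ]
    [SFinite ν] [ν.IsAddRightInvariant] {h : α → G} (hh : Measurable h) :
    MeasurePreserving (fun p : α × G => (p.1, p.2 - h p.1)) (μ.prod ν) (μ.prod ν) :=
  (MeasurePreserving.id μ).skew_product (g := fun a t => t - h a)
    (measurable_snd.sub (hh.comp measurable_fst))
    (ae_of_all _ fun a => (measurePreserving_sub_right ν (h a)).map_eq)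

theorem intervalIntegral_le_integral_of_ae_le {μ : Measure ℝ} {φ ψ : ℝ → ℝ} (a b : ℝ)
    (hφ : 0 ≤ᵐ[μ] φ) (hφψ : φ ≤ᵐ[μ] ψ) (hψ : Integrable ψ μ) :
    ∫ t in a..b, φ t ∂μ ≤ ∫ t, ψ t ∂μ := by
  have hψ_nonneg : 0 ≤ᵐ[μ] ψ := by filter_upwards [hφ, hφψ] with t h₁ h₂ using h₁.trans h₂
  rcases le_total a b with hab | hba
  · rw [intervalIntegral.integral_of_le hab]
    calc ∫ t in Ioc a b, φ t ∂μ ≤ ∫ t in Ioc a b, ψ t ∂μ :=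
          integral_mono_of_nonneg (ae_restrict_of_ae hφ) hψ.restrict (ae_restrict_of_ae hφψ)
      _ ≤ ∫ t, ψ t ∂μ := setIntegral_le_integral hψ hψ_nonneg
  · rw [intervalIntegral.integral_symm]
    exact (neg_nonpos.2 (intervalIntegral.integral_nonneg_of_ae hba hφ)).trans
      (integral_nonneg_of_ae hψ_nonneg)

theorem extended_modeling_operator_bounded_general
    (zmin zmax zr T c : ℝ) (hz : zmin < zmax) (hc : 0 < c)
    (f : ℝ → ℝ → ℝ)
    (hf : MemLp (fun p : ℝ × ℝ => f p.1 p.2) 2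
      ((volume.restrict (Icc zmin zmax)).prod volume)) :
    Real.sqrt (∫ t in (0:ℝ)..T,
        ((1/(2*c)) * ∫ z in zmin..zmax, f z (t - |zr - z| / c)) ^ 2)
      ≤ (Real.sqrt (zmax - zmin) / (2*c)) *
        Real.sqrt (∫ z in zmin..zmax, ∫ t : ℝ, (f z t) ^ 2) := by
  set μ := volume.restrict (Icc zmin zmax)
  have hμ : μ.real univ = zmax - zmin := by simp [μ, hz.le]
  have hinterval (g : ℝ → ℝ) : ∫ z in zmin..zmax, g z = ∫ z, g z ∂μ := by
    rw [intervalIntegral.integral_of_le hz.le, integral_Icc_eq_integral_Ioc]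
  set F : ℝ × ℝ → ℝ := fun p => f p.1 (p.2 - |zr - p.1| / c)
  have hF : MemLp F 2 (μ.prod volume) :=
    hf.comp_measurePreserving
      (measurePreserving_prod_sub_shear μ volume (h := fun z => |zr - z| / c) (by fun_prop))
  have htotal : ∫ t, ∫ z, F (z, t) ^ 2 ∂μ = ∫ z in zmin..zmax, ∫ t, f z t ^ 2 := by
    rw [hinterval, ← integral_integral_swap hF.integrable_sq]
    exact integral_congr_ae
      (ae_of_all _ fun z => integral_sub_right_eq_self (f z · ^ 2) (|zr - z| / c))
  have hbound : ∫ t in (0:ℝ)..T, (∫ z, F (z, t) ∂μ) ^ 2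
      ≤ ∫ t, (zmax - zmin) * ∫ z, F (z, t) ^ 2 ∂μ :=
    intervalIntegral_le_integral_of_ae_le _ _ (ae_of_all _ fun _ => sq_nonneg _)
      (hμ ▸ ae_sq_integral_prodMk_right_le hF) (hF.integrable_sq.integral_prod_right.const_mul _)
  calc _ = 1 / (2 * c) * Real.sqrt (∫ t in (0:ℝ)..T, (∫ z, F (z, t) ∂μ) ^ 2) := by
        simp only [mul_pow, intervalIntegral.integral_const_mul, hinterval]
        rw [Real.sqrt_mul (by positivity), Real.sqrt_sq (by positivity)]
    _ ≤ 1 / (2 * c) * Real.sqrt (∫ t, (zmax - zmin) * ∫ z, F (z, t) ^ 2 ∂μ) := by gcongr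
    _ = _ := by rw [integral_const_mul, htotal, Real.sqrt_mul (sub_nonneg.2 hz.le)]; ring

/-- The extended modeling operator `S[c]` is bounded from `L²([zmin,zmax]×ℝ)` to
`L²([0,T])`, with operator norm at most `√(zmax - zmin)/(2c)`. -/
theorem extended_modeling_operator_bounded
    (zmin zmax zr T c : ℝ) (hz : zmin < zmax) (hT : 0 < T) (hc : 0 < c)
    (f : ℝ → ℝ → ℝ)
    (hf : MemLp (fun p : ℝ × ℝ => f p.1 p.2) 2
      ((volume.restrict (Icc zmin zmax)).prod volume)) :
    Real.sqrt (∫ t in (0:ℝ)..T,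
        ((1/(2*c)) * ∫ z in zmin..zmax, f z (t - |zr - z| / c)) ^ 2)
      ≤ (Real.sqrt (zmax - zmin) / (2*c)) *
        Real.sqrt (∫ z in zmin..zmax, ∫ t : ℝ, (f z t) ^ 2) :=
  extended_modeling_operator_bounded_general zmin zmax zr T c hz hc f hf
end
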